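/- Let β ≥ 0 and consider the real vector space W_β of C² solutions (x,y): ℝ → ℝ² of the system (E_β) that are 2π-anti-periodic, i.e., x(t+2π) = −x(t) and y(t+2π) = −y(t) for all t. Then dim W_β = 2 if β = β̂_{n+1/2} for some integer n ≥ 1, and dim W_β = 0 for all other β ≥ 0. -/

import Mathlib

/-!
Written as a first-order system `u' = A u` on `ℝ⁴`, (E_β) has characteristic polynomial
`λ⁴ + (1 - β) λ² - β (2β + 3)`. For `β > 0` its roots are `±r` and `±iθ` with `r, θ > 0`, and
the eigenvectors give a fundamental system of two exponential and two rotating solutions. Over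
one period the exponential solutions are multiplied by `e^{±2πr} ≠ -1`, while the rotating ones
turn by the angle `2πθ`; hence the anti-periodic solutions are exactly the rotating ones when
`cos 2πθ = -1`, i.e. `θ ∈ ℕ + 1/2`, and only zero otherwise. Solving the characteristic equation
for `β` at `θ = n + 1/2` gives `β = β̂_{n+1/2}`, and `n = 0` is impossible because `θ ≥ 1`. For
`β = 0` the roots are `±i` and a double root `0`, carrying a secular solution, and again nothing
is anti-periodic.
-/

open Real Set Function

noncomputable section

section LinearODE

variable {E : Type*} [NormedAddCommGroup E] [NormedSpace ℝ E]

def IsSolution (L : E →L[ℝ] E) (u : ℝ → E) : Prop :=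
  ∀ t, HasDerivAt u (L (u t)) t

namespace IsSolution

variable {L : E →L[ℝ] E} {u v : ℝ → E}

theorem eq_of_apply_zero_eq (hu : IsSolution L u) (hv : IsSolution L v) (h0 : u 0 = v 0) :
    u = v :=
  ODE_solution_unique_univ (v := fun _ => L) (s := fun _ => univ)
    (fun _ => L.lipschitz.lipschitzOnWith) (fun t => ⟨hu t, trivial⟩)
    (fun t => ⟨hv t, trivial⟩) h0

theorem sum_smul {ι : Type*} [Fintype ι] {F : ι → ℝ → E} (hF : ∀ i, IsSolution L (F i))
    (c : ι → ℝ) : IsSolution L (fun t => ∑ i, c i • F i t) := fun t => by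
  simpa only [map_sum, map_smul] using
    HasDerivAt.fun_sum (A := fun i t => c i • F i t) fun i _ => (hF i t).const_smul (c i)

theorem exists_eq_sum_smul [FiniteDimensional ℝ E] {ι : Type*} [Fintype ι]
    {F : ι → ℝ → E} (hF : ∀ i, IsSolution L (F i))
    (hli : LinearIndependent ℝ fun i => F i 0) (hcard : Fintype.card ι = Module.finrank ℝ E)
    (hu : IsSolution L u) : ∃ c : ι → ℝ, u = fun t => ∑ i, c i • F i t := by
  have hspan := hli.span_eq_top_of_card_eq_finrank' hcard
  obtain ⟨c, hc⟩ := (Submodule.mem_span_range_iff_exists_fun ℝ).mp (hspan ▸ Submodule.mem_top)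
  exact ⟨c, hu.eq_of_apply_zero_eq (sum_smul hF c) hc.symm⟩

theorem contDiff_one (hu : IsSolution L u) : ContDiff ℝ 1 u := by
  have hderiv : deriv u = fun t => L (u t) := funext fun t => (hu t).deriv
  have hdiff : Differentiable ℝ u := fun t => (hu t).differentiableAt
  exact contDiff_one_iff_deriv.mpr ⟨hdiff, hderiv ▸ L.continuous.comp hdiff.continuous⟩

end IsSolution

end LinearODE

theorem Function.Antiperiodic.deriv {F : Type*} [NormedAddCommGroup F] [NormedSpace ℝ F]
    {f : ℝ → F} {c : ℝ} (h : Antiperiodic f c) : Antiperiodic (deriv f) c := fun x => by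
  rw [← deriv_comp_add_const, funext h, deriv.fun_neg]

theorem HasDerivAt.fst {F G : Type*} [NormedAddCommGroup F] [NormedSpace ℝ F]
    [NormedAddCommGroup G] [NormedSpace ℝ G] {f : ℝ → F × G} {v : F × G} {t : ℝ}
    (h : HasDerivAt f v t) : HasDerivAt (fun s => (f s).1) v.1 t :=
  (ContinuousLinearMap.fst ℝ F G).hasFDerivAt.comp_hasDerivAt t h

theorem HasDerivAt.snd {F G : Type*} [NormedAddCommGroup F] [NormedSpace ℝ F]
    [NormedAddCommGroup G] [NormedSpace ℝ G] {f : ℝ → F × G} {v : F × G} {t : ℝ}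
    (h : HasDerivAt f v t) : HasDerivAt (fun s => (f s).2) v.2 t :=
  (ContinuousLinearMap.snd ℝ F G).hasFDerivAt.comp_hasDerivAt t h

theorem hasDerivAt_prod_deriv {F : Type*} [NormedAddCommGroup F] [NormedSpace ℝ F]
    {f : ℝ → F} (hf : ContDiff ℝ 2 f) (t : ℝ) :
    HasDerivAt (fun s => (f s, deriv f s)) (deriv f t, deriv (deriv f) t) t := by
  have hf1 : Differentiable ℝ (deriv f) :=
    (hf.iterate_deriv' 1 1).differentiable one_ne_zero
  exact (hf.differentiable two_ne_zero t).hasDerivAt.prodMk (hf1 t).hasDerivAt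

theorem LinearIndependent.fin_four_iff {R M : Type*} [Ring R] [AddCommGroup M] [Module R M]
    {v : Fin 4 → M} : LinearIndependent R v ↔ ∀ a b c d : R,
      a • v 0 + b • v 1 + c • v 2 + d • v 3 = 0 → a = 0 ∧ b = 0 ∧ c = 0 ∧ d = 0 := by
  simp [Fintype.linearIndependent_iff, Fin.sum_univ_four, Fin.forall_fin_succ,
    ← FinVec.forall_iff]
  rfl

theorem Set.finrank_eq_card_of_linearIndependent {K M ι : Type*} [DivisionRing K]
    [AddCommGroup M] [Module K M] [Fintype ι] {s : Set M} {v : ι → M}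
    (hv : LinearIndependent K v) (hvs : range v ⊆ s) (hsv : s ⊆ Submodule.span K (range v)) :
    Set.finrank K s = Fintype.card ι := by
  rw [Set.finrank, le_antisymm (Submodule.span_le.mpr hsv) (Submodule.span_mono hvs),
    finrank_span_eq_card hv]

theorem Set.finrank_eq_zero_of_subset_zero {K M : Type*} [DivisionRing K]
    [AddCommGroup M] [Module K M] {s : Set M} (hs : s ⊆ {0}) : Set.finrank K s = 0 := by
  rw [Set.finrank, Submodule.span_eq_bot.mpr hs, finrank_bot]

section ExplicitSolutions

variable {E : Type*} [NormedAddCommGroup E] [NormedSpace ℝ E] {L : E →L[ℝ] E}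

theorem isSolution_const {v : E} (hv : L v = 0) : IsSolution L fun _ => v := fun t => by
  simpa [hv] using hasDerivAt_const t v

theorem isSolution_smul_add {u w : E} (hw : L w = 0) (hu : L u = w) :
    IsSolution L fun t => t • w + u := fun t => by
  simpa [hw, hu] using ((hasDerivAt_id t).smul_const w).add_const u

theorem isSolution_exp_smul {r : ℝ} {v : E} (hv : L v = r • v) :
    IsSolution L fun t => exp (r * t) • v := fun t => by
  have := ((hasDerivAt_id t).const_mul r).exp.smul_const v
  simpa [hv, smul_smul, mul_comm] using this

def rotSol (θ : ℝ) (a b : E) (t : ℝ) : E := cos (θ * t) • a + sin (θ * t) • b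

theorem isSolution_rotSol {θ : ℝ} {a b : E} (ha : L a = θ • b) (hb : L b = -θ • a) :
    IsSolution L (rotSol θ a b) := fun t => by
  have hlin := (hasDerivAt_id' t).const_mul θ
  refine ((hlin.cos.smul_const a).fun_add (hlin.sin.smul_const b)).congr_deriv ?_
  simp only [rotSol, map_add, map_smul, ha, hb, smul_smul]
  module

theorem rotSol_zero (θ : ℝ) (a b : E) : rotSol θ a b 0 = a := by simp [rotSol]

theorem rotSol_add (θ : ℝ) (a b : E) (t T : ℝ) :
    rotSol θ a b (t + T) = cos (θ * T) • rotSol θ a b t + sin (θ * T) • rotSol θ b (-a) t := by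
  simp only [rotSol, mul_add, cos_add, sin_add]
  module

theorem rotSol_antiperiodic {θ T : ℝ} (a b : E) (h : cos (θ * T) = -1) :
    Antiperiodic (rotSol θ a b) T := fun t => by
  have hsin : sin (θ * T) = 0 := by nlinarith [sin_sq_add_cos_sq (θ * T)]
  rw [rotSol_add, h, hsin]
  module

end ExplicitSolutions

-- a point `((x, y), (x', y'))` of the phase space of (E_β)
abbrev State := (ℝ × ℝ) × (ℝ × ℝ)

def eulerOp (β : ℝ) : State →L[ℝ] State :=
  LinearMap.toContinuousLinearMap
    { toFun := fun p => (p.2, ((2 * β + 3) * p.1.1 + 2 * p.2.2, -β * p.1.2 - 2 * p.2.1))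
      map_add' := fun p q => by ext <;> simp <;> ring
      map_smul' := fun c p => by ext <;> simp <;> ring }

@[simp]
theorem eulerOp_apply (β : ℝ) (p : State) :
    eulerOp β p = (p.2, ((2 * β + 3) * p.1.1 + 2 * p.2.2, -β * p.1.2 - 2 * p.2.1)) := rfl

def antiperiodicSolutions (β : ℝ) : Set (ℝ → ℝ × ℝ) :=
  {f | ContDiff ℝ 2 f ∧ Antiperiodic f (2 * π) ∧
    ∀ t, (deriv (deriv f) t).1 = (2 * β + 3) * (f t).1 + 2 * (deriv f t).2 ∧
      (deriv (deriv f) t).2 = -β * (f t).2 - 2 * (deriv f t).1}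

section SecondOrder

variable {β : ℝ}

theorem isSolution_of_mem_antiperiodicSolutions {f : ℝ → ℝ × ℝ}
    (hf : f ∈ antiperiodicSolutions β) : IsSolution (eulerOp β) fun t => (f t, deriv f t) :=
  fun t => (hasDerivAt_prod_deriv hf.1 t).congr_deriv
    (Prod.ext rfl (Prod.ext (hf.2.2 t).1 (hf.2.2 t).2))

theorem antiperiodic_of_mem_antiperiodicSolutions {f : ℝ → ℝ × ℝ}
    (hf : f ∈ antiperiodicSolutions β) : Antiperiodic (fun t => (f t, deriv f t)) (2 * π) :=
  fun t => Prod.ext (hf.2.1 t) (hf.2.1.deriv t)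

theorem fst_mem_antiperiodicSolutions {g : ℝ → State} (hg : IsSolution (eulerOp β) g)
    (hap : Antiperiodic g (2 * π)) : (fun t => (g t).1) ∈ antiperiodicSolutions β := by
  have hd1 : deriv (fun t => (g t).1) = fun t => (g t).2 := funext fun t => (hg t).fst.deriv
  have hd2 : deriv (fun t => (g t).2) = fun t => (eulerOp β (g t)).2 :=
    funext fun t => (hg t).snd.deriv
  refine ⟨?_, fun t => congrArg Prod.fst (hap t), fun t => ?_⟩
  · rw [show (2 : WithTop ℕ∞) = 1 + 1 from rfl, contDiff_succ_iff_deriv, hd1]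
    exact ⟨hg.contDiff_one.fst.differentiable one_ne_zero, by simp, hg.contDiff_one.snd⟩
  · simp [hd1, hd2]

theorem antiperiodicSolutions_subset_zero
    (h : ∀ g, IsSolution (eulerOp β) g → Antiperiodic g (2 * π) → g = 0) :
    antiperiodicSolutions β ⊆ {0} := fun f hf => show f = 0 from
  congrArg (fun g t => (g t).1) (h _ (isSolution_of_mem_antiperiodicSolutions hf)
    (antiperiodic_of_mem_antiperiodicSolutions hf))

end SecondOrder

section Eigenvectors

variable {β θ r : ℝ}

def expVec (β r : ℝ) : State := ((r ^ 2 + β, -(2 * r)), (r * (r ^ 2 + β), -(2 * r ^ 2)))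

def cosVec (β θ : ℝ) : State := ((β - θ ^ 2, 0), (0, 2 * θ ^ 2))

def sinVec (β θ : ℝ) : State := ((0, 2 * θ), (-((β - θ ^ 2) * θ), 0))

theorem eulerOp_expVec (hr : r ^ 4 + (1 - β) * r ^ 2 = β * (2 * β + 3)) :
    eulerOp β (expVec β r) = r • expVec β r := by
  simp only [expVec, eulerOp_apply, Prod.smul_mk, smul_eq_mul, Prod.mk.injEq]
  exact ⟨⟨trivial, by ring⟩, by linear_combination -hr, by ring⟩

theorem eulerOp_cosVec (hθ : θ ^ 4 + (β - 1) * θ ^ 2 = β * (2 * β + 3)) :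
    eulerOp β (cosVec β θ) = θ • sinVec β θ := by
  simp only [cosVec, sinVec, eulerOp_apply, Prod.smul_mk, smul_eq_mul, Prod.mk.injEq]
  exact ⟨⟨by ring, by ring⟩, by linear_combination -hθ, by ring⟩

theorem eulerOp_sinVec : eulerOp β (sinVec β θ) = -θ • cosVec β θ := by
  simp only [cosVec, sinVec, eulerOp_apply, Prod.smul_mk, smul_eq_mul, Prod.mk.injEq]
  refine ⟨⟨?_, ?_⟩, ?_, ?_⟩ <;> ring

theorem linearIndependent_eigenvectors (hβ : β ≠ 0) (hθ : θ ≠ 0) (hr : r ≠ 0) :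
    LinearIndependent ℝ ![expVec β r, expVec β (-r), cosVec β θ, sinVec β θ] := by
  refine LinearIndependent.fin_four_iff.mpr fun a b c d h => ?_
  simp only [Matrix.cons_val, expVec, cosVec, sinVec, Prod.smul_mk, smul_eq_mul, Prod.mk_add_mk,
    Prod.mk_eq_zero] at h
  obtain ⟨⟨e1, e2⟩, e3, e4⟩ := h
  have hsum : a + b = 0 := by
    have : 2 * β * (θ ^ 2 + r ^ 2) * (a + b) = 0 := by
      linear_combination (2 * θ ^ 2) * e1 - (β - θ ^ 2) * e4
    exact (mul_eq_zero.mp this).resolve_left (by positivity)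
  have hdiff : a - b = 0 := by
    have : 2 * r * (r ^ 2 + θ ^ 2) * (a - b) = 0 := by
      linear_combination 2 * e3 + (β - θ ^ 2) * e2
    exact (mul_eq_zero.mp this).resolve_left (by positivity)
  have ha : a = 0 := by linarith
  have hb : b = 0 := by linarith
  refine ⟨ha, hb, ?_, ?_⟩
  · have : 2 * θ ^ 2 * c = 0 := by linear_combination e4 + 2 * r ^ 2 * ha + 2 * r ^ 2 * hb
    exact (mul_eq_zero.mp this).resolve_left (by positivity)
  · have : 2 * θ * d = 0 := by linear_combination e2 + 2 * r * ha - 2 * r * hb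
    exact (mul_eq_zero.mp this).resolve_left (by positivity)

end Eigenvectors

section Positive

variable {β θ r : ℝ}

theorem isSolution_rotSol_cosVec (hθ : θ ^ 4 + (β - 1) * θ ^ 2 = β * (2 * β + 3)) :
    IsSolution (eulerOp β) (rotSol θ (cosVec β θ) (sinVec β θ)) :=
  isSolution_rotSol (eulerOp_cosVec hθ) eulerOp_sinVec

theorem isSolution_rotSol_sinVec (hθ : θ ^ 4 + (β - 1) * θ ^ 2 = β * (2 * β + 3)) :
    IsSolution (eulerOp β) (rotSol θ (sinVec β θ) (-cosVec β θ)) :=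
  isSolution_rotSol (by rw [eulerOp_sinVec, neg_smul, smul_neg])
    (by rw [map_neg, eulerOp_cosVec hθ, neg_smul])

def fundamentalSystem (β θ r : ℝ) : Fin 4 → ℝ → State :=
  ![fun t => exp (r * t) • expVec β r, fun t => exp (-r * t) • expVec β (-r),
    rotSol θ (cosVec β θ) (sinVec β θ), rotSol θ (sinVec β θ) (-cosVec β θ)]

theorem isSolution_fundamentalSystem (hθ : θ ^ 4 + (β - 1) * θ ^ 2 = β * (2 * β + 3))
    (hr : r ^ 4 + (1 - β) * r ^ 2 = β * (2 * β + 3)) (i : Fin 4) :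
    IsSolution (eulerOp β) (fundamentalSystem β θ r i) := by
  fin_cases i
  · exact isSolution_exp_smul (eulerOp_expVec hr)
  · exact isSolution_exp_smul (eulerOp_expVec (by linear_combination hr))
  · exact isSolution_rotSol_cosVec hθ
  · exact isSolution_rotSol_sinVec hθ

theorem fundamentalSystem_apply_zero : (fun i => fundamentalSystem β θ r i 0) =
    ![expVec β r, expVec β (-r), cosVec β θ, sinVec β θ] := by
  funext i
  fin_cases i <;> simp [fundamentalSystem, rotSol_zero]

theorem exists_rotSol_coeffs_of_antiperiodic (hβ : β ≠ 0) (hθ0 : θ ≠ 0) (hr0 : r ≠ 0)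
    (hθ : θ ^ 4 + (β - 1) * θ ^ 2 = β * (2 * β + 3))
    (hr : r ^ 4 + (1 - β) * r ^ 2 = β * (2 * β + 3))
    {g : ℝ → State} (hg : IsSolution (eulerOp β) g) (hap : Antiperiodic g (2 * π)) :
    ∃ a b : ℝ,
      g = a • rotSol θ (cosVec β θ) (sinVec β θ) + b • rotSol θ (sinVec β θ) (-cosVec β θ) ∧
      a * (cos (θ * (2 * π)) + 1) - b * sin (θ * (2 * π)) = 0 ∧
      a * sin (θ * (2 * π)) + b * (cos (θ * (2 * π)) + 1) = 0 := by
  have hli := linearIndependent_eigenvectors hβ hθ0 hr0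
  obtain ⟨c, rfl⟩ := hg.exists_eq_sum_smul (isSolution_fundamentalSystem hθ hr)
    (fundamentalSystem_apply_zero ▸ hli) (by simp)
  -- `g (2π) = -g 0` in the eigenbasis: the exponential modes are scaled by `e^{±2πr}`, the
  -- rotating ones turned by the angle `2πθ`
  have key := hap 0
  simp only [Fin.sum_univ_four, fundamentalSystem, Matrix.cons_val, rotSol, zero_add, mul_zero,
    exp_zero, cos_zero, sin_zero, one_smul, zero_smul, add_zero] at key
  obtain ⟨h0, h1, h2, h3⟩ := LinearIndependent.fin_four_iff.mp hli
    (c 0 * (exp (r * (2 * π)) + 1)) (c 1 * (exp (-r * (2 * π)) + 1))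
    (c 2 * (cos (θ * (2 * π)) + 1) - c 3 * sin (θ * (2 * π)))
    (c 2 * sin (θ * (2 * π)) + c 3 * (cos (θ * (2 * π)) + 1))
    (by simp only [Matrix.cons_val]; linear_combination (norm := module) key)
  have hc0 : c 0 = 0 := (mul_eq_zero.mp h0).resolve_right (by positivity)
  have hc1 : c 1 = 0 := (mul_eq_zero.mp h1).resolve_right (by positivity)
  refine ⟨c 2, c 3, funext fun t => ?_, h2, h3⟩
  simp [Fin.sum_univ_four, fundamentalSystem, hc0, hc1]

end Positive

section Degenerate

def constVec : State := ((0, 1), (0, 0))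

def driftVec : State := ((2, 0), (0, -3))

theorem eulerOp_zero_constVec : eulerOp 0 constVec = 0 := by simp [constVec]

theorem eulerOp_zero_driftVec : eulerOp 0 driftVec = (-3 : ℝ) • constVec := by
  norm_num [driftVec, constVec]

theorem linearIndependent_degenerate :
    LinearIndependent ℝ ![constVec, driftVec, cosVec 0 1, sinVec 0 1] := by
  refine LinearIndependent.fin_four_iff.mpr fun a b c d h => ?_
  simp only [Matrix.cons_val, constVec, driftVec, cosVec, sinVec, Prod.smul_mk, smul_eq_mul,
    Prod.mk_add_mk, Prod.mk_eq_zero] at h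
  obtain ⟨⟨e1, e2⟩, e3, e4⟩ := h
  refine ⟨?_, ?_, ?_, ?_⟩ <;> linarith

def degenerateSystem : Fin 4 → ℝ → State :=
  ![fun _ => constVec, fun t => t • (-3 : ℝ) • constVec + driftVec,
    rotSol 1 (cosVec 0 1) (sinVec 0 1), rotSol 1 (sinVec 0 1) (-cosVec 0 1)]

theorem isSolution_degenerateSystem (i : Fin 4) :
    IsSolution (eulerOp 0) (degenerateSystem i) := by
  have hθ : (1 : ℝ) ^ 4 + (0 - 1) * 1 ^ 2 = 0 * (2 * 0 + 3) := by norm_num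
  fin_cases i
  · exact isSolution_const eulerOp_zero_constVec
  · exact isSolution_smul_add (by rw [map_smul, eulerOp_zero_constVec, smul_zero])
      eulerOp_zero_driftVec
  · exact isSolution_rotSol_cosVec hθ
  · exact isSolution_rotSol_sinVec hθ

theorem degenerateSystem_apply_zero :
    (fun i => degenerateSystem i 0) = ![constVec, driftVec, cosVec 0 1, sinVec 0 1] := by
  funext i
  fin_cases i <;> simp [degenerateSystem, rotSol_zero]

theorem eq_zero_of_antiperiodic_of_beta_eq_zero {g : ℝ → State}
    (hg : IsSolution (eulerOp 0) g) (hap : Antiperiodic g (2 * π)) : g = 0 := by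
  have hli := linearIndependent_degenerate
  obtain ⟨c, rfl⟩ := hg.exists_eq_sum_smul isSolution_degenerateSystem
    (degenerateSystem_apply_zero ▸ hli) (by simp)
  have key := hap 0
  simp only [Fin.sum_univ_four, degenerateSystem, Matrix.cons_val, rotSol, zero_add, one_mul,
    mul_zero, cos_two_pi, sin_two_pi, cos_zero, sin_zero, one_smul, zero_smul, add_zero] at key
  -- the drift solution picks up `-6π • constVec` over one period
  obtain ⟨h0, h1, h2, h3⟩ := LinearIndependent.fin_four_iff.mp hli
    (2 * c 0 - 6 * π * c 1) (2 * c 1) (2 * c 2) (2 * c 3)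
    (by simp only [Matrix.cons_val]; linear_combination (norm := module) key)
  have hc1 : c 1 = 0 := by linarith
  have hc0 : c 0 = 0 := by rw [hc1] at h0; linarith
  have hc2 : c 2 = 0 := by linarith
  have hc3 : c 3 = 0 := by linarith
  funext t
  simp [Fin.sum_univ_four, hc0, hc1, hc2, hc3]

end Degenerate

-- `iθ` (resp. `r`) is a root of the characteristic polynomial `λ⁴ + (1 - β) λ² - β (2β + 3)`
-- of `eulerOp β` iff `θ ^ 4 + (β - 1) * θ ^ 2 = β * (2 * β + 3)`
-- (resp. `r ^ 4 + (1 - β) * r ^ 2 = β * (2 * β + 3)`).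
section CharacteristicRoots

variable {β θ : ℝ}

def betaHat (θ : ℝ) : ℝ := (θ ^ 2 - 3 + √(9 * θ ^ 4 - 14 * θ ^ 2 + 9)) / 4

theorem one_le_of_charEq (hβ : 0 ≤ β) (hθ : 0 < θ)
    (h : θ ^ 4 + (β - 1) * θ ^ 2 = β * (2 * β + 3)) : 1 ≤ θ := by
  by_contra! hlt
  have hθ2 : θ ^ 2 < 1 := by nlinarith
  have hθ4 : θ ^ 4 < θ ^ 2 := by nlinarith [mul_lt_mul_of_pos_left hθ2 (pow_pos hθ 2)]
  nlinarith [mul_le_mul_of_nonneg_left hθ2.le hβ]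

theorem exists_charRoot (hβ : 0 ≤ β) :
    ∃ θ : ℝ, 0 < θ ∧ θ ^ 4 + (β - 1) * θ ^ 2 = β * (2 * β + 3) := by
  -- `θ ^ 2` is the positive root of `ν ^ 2 + (β - 1) * ν = β * (2 * β + 3)`
  set s := √(9 * β ^ 2 + 10 * β + 1)
  have hs : s ^ 2 = 9 * β ^ 2 + 10 * β + 1 := sq_sqrt (by positivity)
  have hν : 0 < (1 - β + s) / 2 := by nlinarith [sqrt_nonneg (9 * β ^ 2 + 10 * β + 1)]
  have hθ : √((1 - β + s) / 2) ^ 2 = (1 - β + s) / 2 := sq_sqrt hν.le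
  refine ⟨√((1 - β + s) / 2), sqrt_pos.mpr hν, ?_⟩
  linear_combination (√((1 - β + s) / 2) ^ 2 + (1 - β + s) / 2 + β - 1) * hθ + hs / 4

theorem charRoot_unique {θ' : ℝ} (hβ : 0 ≤ β) (hθ : 0 < θ) (hθ' : 0 < θ')
    (h : θ ^ 4 + (β - 1) * θ ^ 2 = β * (2 * β + 3))
    (h' : θ' ^ 4 + (β - 1) * θ' ^ 2 = β * (2 * β + 3)) : θ = θ' := by
  have h1 := one_le_of_charEq hβ hθ h
  have h1' := one_le_of_charEq hβ hθ' h'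
  have hsq : (θ ^ 2 - θ' ^ 2) * (θ ^ 2 + θ' ^ 2 + β - 1) = 0 := by linear_combination h - h'
  have hpos : θ ^ 2 + θ' ^ 2 + β - 1 ≠ 0 := by nlinarith
  exact (pow_left_inj₀ hθ.le hθ'.le two_ne_zero).mp (sub_eq_zero.mp
    ((mul_eq_zero.mp hsq).resolve_right hpos))

theorem exists_realRoot (hβ : 0 < β) (hθ : θ ≠ 0)
    (h : θ ^ 4 + (β - 1) * θ ^ 2 = β * (2 * β + 3)) :
    ∃ r : ℝ, r ≠ 0 ∧ r ^ 4 + (1 - β) * r ^ 2 = β * (2 * β + 3) := by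
  have hpos : 0 < θ ^ 2 + β - 1 := by
    refine pos_of_mul_pos_right (a := θ ^ 2) ?_ (by positivity)
    nlinarith
  have hr : √(θ ^ 2 + β - 1) ^ 2 = θ ^ 2 + β - 1 := sq_sqrt hpos.le
  refine ⟨√(θ ^ 2 + β - 1), (sqrt_pos.mpr hpos).ne', ?_⟩
  linear_combination (√(θ ^ 2 + β - 1) ^ 2 + θ ^ 2) * hr + h

theorem ne_sq_of_charEq (hβ : β ≠ 0) (h : θ ^ 4 + (β - 1) * θ ^ 2 = β * (2 * β + 3)) :
    β - θ ^ 2 ≠ 0 := by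
  intro hsq
  apply hβ
  linear_combination (-(θ ^ 2 + 2 * β - 1) / 4) * hsq - h / 4

theorem eq_betaHat_iff (hβ : 0 ≤ β) :
    β = betaHat θ ↔ θ ^ 4 + (β - 1) * θ ^ 2 = β * (2 * β + 3) := by
  rw [betaHat]
  have hD : 0 ≤ 9 * θ ^ 4 - 14 * θ ^ 2 + 9 := by nlinarith [sq_nonneg (3 * θ ^ 2 - 7 / 3)]
  have hs := sq_sqrt hD
  constructor
  · rintro rfl
    linear_combination -hs / 8
  · intro h
    have hnonneg : 0 ≤ 4 * β + 3 - θ ^ 2 := by nlinarith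
    rw [show 9 * θ ^ 4 - 14 * θ ^ 2 + 9 = (4 * β + 3 - θ ^ 2) ^ 2 by linear_combination 8 * h,
      sqrt_sq hnonneg]
    ring

theorem resonant_iff (hβ : 0 ≤ β) (hθ : 0 < θ) (h : θ ^ 4 + (β - 1) * θ ^ 2 = β * (2 * β + 3)) :
    (∃ n : ℕ, 1 ≤ n ∧ β = betaHat (n + 1 / 2)) ↔ cos (θ * (2 * π)) = -1 := by
  constructor
  · rintro ⟨n, hn, hβn⟩
    have hθn := charRoot_unique hβ hθ (by positivity) h ((eq_betaHat_iff hβ).mp hβn)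
    exact cos_eq_neg_one_iff.mpr ⟨n, by rw [hθn]; push_cast; ring⟩
  · intro hC
    obtain ⟨k, hk⟩ := cos_eq_neg_one_iff.mp hC
    have hθk : θ = k + 1 / 2 := by nlinarith [pi_pos]
    have hk1 : (1 : ℤ) ≤ k := by
      have := one_le_of_charEq hβ hθ h
      have : (0 : ℝ) < k := by linarith
      exact_mod_cast this
    refine ⟨k.toNat, by omega, ?_⟩
    have hkn : ((k.toNat : ℕ) : ℝ) = k := by exact_mod_cast Int.toNat_of_nonneg (by omega)
    rw [hkn, ← hθk]
    exact (eq_betaHat_iff hβ).mpr h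

end CharacteristicRoots

section Dimension

variable {β θ : ℝ}

theorem eq_zero_of_rotation {C S a b : ℝ} (hCS : S ^ 2 + C ^ 2 = 1) (hC : C ≠ -1)
    (h₁ : a * (C + 1) - b * S = 0) (h₂ : a * S + b * (C + 1) = 0) : a = 0 ∧ b = 0 := by
  have hC' : 2 * (C + 1) ≠ 0 := by
    intro h
    exact hC (by linarith)
  have ha : 2 * (C + 1) * a = 0 := by linear_combination (C + 1) * h₁ + S * h₂ - a * hCS
  have hb : 2 * (C + 1) * b = 0 := by linear_combination (C + 1) * h₂ - S * h₁ - b * hCS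
  exact ⟨(mul_eq_zero.mp ha).resolve_left hC', (mul_eq_zero.mp hb).resolve_left hC'⟩

theorem antiperiodicSolutions_subset_zero_of_cos_ne (hβ : 0 < β) (hθ : 0 < θ)
    (h : θ ^ 4 + (β - 1) * θ ^ 2 = β * (2 * β + 3)) (hC : cos (θ * (2 * π)) ≠ -1) :
    antiperiodicSolutions β ⊆ {0} := by
  obtain ⟨r, hr0, hr⟩ := exists_realRoot hβ hθ.ne' h
  refine antiperiodicSolutions_subset_zero fun g hg hap => ?_
  obtain ⟨a, b, rfl, h₁, h₂⟩ :=
    exists_rotSol_coeffs_of_antiperiodic hβ.ne' hθ.ne' hr0 h hr hg hap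
  obtain ⟨rfl, rfl⟩ := eq_zero_of_rotation (sin_sq_add_cos_sq _) hC h₁ h₂
  simp

theorem finrank_antiperiodicSolutions_of_cos_eq (hβ : 0 < β) (hθ : 0 < θ)
    (h : θ ^ 4 + (β - 1) * θ ^ 2 = β * (2 * β + 3)) (hC : cos (θ * (2 * π)) = -1) :
    Set.finrank ℝ (antiperiodicSolutions β) = 2 := by
  obtain ⟨r, hr0, hr⟩ := exists_realRoot hβ hθ.ne' h
  set f : Fin 2 → ℝ → ℝ × ℝ := ![fun t => (rotSol θ (cosVec β θ) (sinVec β θ) t).1,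
    fun t => (rotSol θ (sinVec β θ) (-cosVec β θ) t).1]
  have hli : LinearIndependent ℝ f := by
    refine LinearIndependent.pair_iff.mpr fun a b hab => ?_
    have h0 := congrFun hab 0
    simp only [Pi.add_apply, Pi.smul_apply, rotSol_zero, cosVec, sinVec,
      Prod.smul_mk, smul_eq_mul, Prod.neg_mk, Prod.mk_add_mk, Pi.zero_apply, Prod.mk_eq_zero] at h0
    obtain ⟨h₁, h₂⟩ := h0
    refine ⟨(mul_eq_zero.mp (by linarith : a * (β - θ ^ 2) = 0)).resolve_right
      (ne_sq_of_charEq hβ.ne' h), (mul_eq_zero.mp (by linarith : b * (2 * θ) = 0)).resolve_right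
      (by positivity)⟩
  rw [Set.finrank_eq_card_of_linearIndependent hli ?_ ?_, Fintype.card_fin]
  · rintro _ ⟨i, rfl⟩
    fin_cases i
    · exact fst_mem_antiperiodicSolutions (isSolution_rotSol_cosVec h) (rotSol_antiperiodic _ _ hC)
    · exact fst_mem_antiperiodicSolutions (isSolution_rotSol_sinVec h) (rotSol_antiperiodic _ _ hC)
  · intro u hu
    obtain ⟨a, b, hab, -⟩ := exists_rotSol_coeffs_of_antiperiodic hβ.ne' hθ.ne' hr0 h hr
      (isSolution_of_mem_antiperiodicSolutions hu) (antiperiodic_of_mem_antiperiodicSolutions hu)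
    have hu' : u = a • f 0 + b • f 1 := congrArg (fun g t => (g t).1) hab
    rw [hu']
    exact add_mem (Submodule.smul_mem _ _ (Submodule.subset_span ⟨0, rfl⟩))
      (Submodule.smul_mem _ _ (Submodule.subset_span ⟨1, rfl⟩))

end Dimension

end

theorem euler_antiperiodic_solution_dimension (β : ℝ) (hβ : 0 ≤ β) :
    ((∃ n : ℕ, 1 ≤ n ∧
        β = (((n : ℝ) + 1 / 2) ^ 2 - 3
              + Real.sqrt (9 * ((n : ℝ) + 1 / 2) ^ 4 - 14 * ((n : ℝ) + 1 / 2) ^ 2 + 9)) / 4) →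
      Set.finrank ℝ {f : ℝ → ℝ × ℝ | ContDiff ℝ 2 f ∧ (∀ t, f (t + 2 * Real.pi) = -f t) ∧
        ∀ t, (deriv (deriv f) t).1 = (2 * β + 3) * (f t).1 + 2 * (deriv f t).2 ∧
             (deriv (deriv f) t).2 = -β * (f t).2 - 2 * (deriv f t).1} = 2) ∧
    ((¬∃ n : ℕ, 1 ≤ n ∧
        β = (((n : ℝ) + 1 / 2) ^ 2 - 3
              + Real.sqrt (9 * ((n : ℝ) + 1 / 2) ^ 4 - 14 * ((n : ℝ) + 1 / 2) ^ 2 + 9)) / 4) →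
      Set.finrank ℝ {f : ℝ → ℝ × ℝ | ContDiff ℝ 2 f ∧ (∀ t, f (t + 2 * Real.pi) = -f t) ∧
        ∀ t, (deriv (deriv f) t).1 = (2 * β + 3) * (f t).1 + 2 * (deriv f t).2 ∧
             (deriv (deriv f) t).2 = -β * (f t).2 - 2 * (deriv f t).1} = 0) := by
  obtain ⟨θ, hθ, h⟩ := exists_charRoot hβ
  have hres := resonant_iff hβ hθ h
  rcases hβ.eq_or_lt with rfl | hβ
  · refine ⟨fun hn => absurd (hres.mp hn) ?_, fun _ => Set.finrank_eq_zero_of_subset_zero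
      (antiperiodicSolutions_subset_zero fun _ => eq_zero_of_antiperiodic_of_beta_eq_zero)⟩
    rw [charRoot_unique le_rfl hθ one_pos h (by norm_num), one_mul, cos_two_pi]
    norm_num
  · exact ⟨fun hn => finrank_antiperiodicSolutions_of_cos_eq hβ hθ h (hres.mp hn),
      fun hn => Set.finrank_eq_zero_of_subset_zero
        (antiperiodicSolutions_subset_zero_of_cos_ne hβ hθ h (mt hres.mpr hn))⟩
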